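/- Identity for the wealth level in the lavish (peak-adjustment) region: for every h₂ > 0 and y > 0, setting h̄₁(y) = (y/z_α)^{−1/γ}, one has −m₁·C₁(h̄₁(y), h₂)·y^{m₁−1} − m₂·C₂(h̄₁(y))·y^{m₂−1} + h̄₁(y)/r = (1/(m₂−γ*))·( (2(1−γ*)/(κ²(m₁−1)(m₁−γ*)))·z_α^{m₁−1} + (m₂−1)/r )·z_α^{1/γ}·y^{−1/γ} − m₁·C₃(h₂)·y^{m₁−1}. -/

import Mathlib

/-- Coefficient `C₂(h)`. -/
noncomputable def C2 (r δ κ γ m₁ m₂ α zα : ℝ) (h : ℝ) : ℝ :=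
  (1 - (γ - 1) / γ) / ((m₁ - m₂) * (m₂ - (γ - 1) / γ)) *
    (m₁ * (α * δ - 1) / δ * zα ^ (-m₂) + (m₁ - 1) / r * zα ^ (1 - m₂)) *
    h ^ (1 + γ * (m₂ - 1))

/-- Coefficient `C₅(h)`. -/
noncomputable def C5 (r δ κ γ m₁ m₂ β zβ : ℝ) (h : ℝ) : ℝ :=
  (1 - (γ - 1) / γ) / ((m₁ - m₂) * (m₁ - (γ - 1) / γ)) *
    (m₂ * (β * δ + 1) / δ * zβ ^ (-m₁) + (1 - m₂) / r * zβ ^ (1 - m₁)) *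
    h ^ (1 + γ * (m₁ - 1))

/-- Coefficient `C₃(h)`. -/
noncomputable def C3 (r δ κ γ m₁ m₂ β zβ : ℝ) (h : ℝ) : ℝ :=
  C5 r δ κ γ m₁ m₂ β zβ h +
    2 * ((γ - 1) / γ - 1) / (κ ^ 2 * (m₁ - m₂) * m₁ * (m₁ - 1) * (m₁ - (γ - 1) / γ)) *
      h ^ (1 + γ * (m₁ - 1))

/-- Coefficient `C₄(h)`. -/
noncomputable def C4 (r δ κ γ m₁ m₂ α zα : ℝ) (h : ℝ) : ℝ :=
  C2 r δ κ γ m₁ m₂ α zα h -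
    2 * ((γ - 1) / γ - 1) / (κ ^ 2 * (m₁ - m₂) * m₂ * (m₂ - 1) * (m₂ - (γ - 1) / γ)) *
      h ^ (1 + γ * (m₂ - 1))

/-- Coefficient `C₁(h₁,h₂)`. -/
noncomputable def C1 (r δ κ γ m₁ m₂ β zβ : ℝ) (h₁ h₂ : ℝ) : ℝ :=
  C3 r δ κ γ m₁ m₂ β zβ h₂ +
    2 * (1 - (γ - 1) / γ) / (κ ^ 2 * (m₁ - m₂) * m₁ * (m₁ - 1) * (m₁ - (γ - 1) / γ)) *
      h₁ ^ (1 + γ * (m₁ - 1))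

/-- Coefficient `C₆(h₁,h₂)`. -/
noncomputable def C6 (r δ κ γ m₁ m₂ α zα : ℝ) (h₁ h₂ : ℝ) : ℝ :=
  C4 r δ κ γ m₁ m₂ α zα h₁ -
    2 * (1 - (γ - 1) / γ) / (κ ^ 2 * (m₁ - m₂) * m₂ * (m₂ - 1) * (m₂ - (γ - 1) / γ)) *
      h₂ ^ (1 + γ * (m₂ - 1))

set_option maxHeartbeats 2000000 in
/-- Identity for the wealth level in the lavish (peak-adjustment)
region: for every `h₂ > 0` and `y > 0`, with `h̄₁(y) = (y/z_α)^{−1/γ}`,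
`−m₁ C₁(h̄₁(y), h₂) y^{m₁−1} − m₂ C₂(h̄₁(y)) y^{m₂−1} + h̄₁(y)/r
 = (1/(m₂−γ*))·((2(1−γ*)/(κ²(m₁−1)(m₁−γ*))) z_α^{m₁−1} + (m₂−1)/r)·z_α^{1/γ}·y^{−1/γ}
   − m₁ C₃(h₂) y^{m₁−1}`. -/
theorem lavish_region_wealth_identity (r δ κ γ m₁ m₂ α β zα zβ : ℝ)
    (hr : 0 < r) (hδ : 0 < δ) (hκ : 0 < κ) (hγ : 0 < γ) (hγ1 : γ ≠ 1)
    (hK : 0 < r + (δ - r) / γ + ((γ - 1) / (2 * γ ^ 2)) * κ ^ 2)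
    (hQ1 : κ ^ 2 / 2 * m₁ ^ 2 + (δ - r - κ ^ 2 / 2) * m₁ - δ = 0)
    (hQ2 : κ ^ 2 / 2 * m₂ ^ 2 + (δ - r - κ ^ 2 / 2) * m₂ - δ = 0)
    (hm1 : 1 < m₁) (hm2 : m₂ < min ((γ - 1) / γ) 0)
    (hα : 0 ≤ α) (hα' : α < 1 / δ) (hβ : 0 ≤ β)
    (hzα : zα ∈ Set.Ioc 0 (1 - α * δ))
    (hzαeq : 2 / (κ ^ 2 * m₁ * (m₁ - 1)) * zα ^ m₁ + zα / r * (m₂ - 1) + m₂ * (α - 1 / δ) = 0)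
    (hzβ : zβ ∈ Set.Ici (1 + β * δ))
    (hzβeq : 2 / (κ ^ 2 * m₂ * (m₂ - 1)) * zβ ^ m₂ + zβ / r * (m₁ - 1) - m₁ * (β + 1 / δ) = 0)
    :
    ∀ h₂ y : ℝ, 0 < h₂ → 0 < y →
      -(m₁ * C1 r δ κ γ m₁ m₂ β zβ ((y / zα) ^ (-(1 / γ))) h₂ * y ^ (m₁ - 1)) -
          m₂ * C2 r δ κ γ m₁ m₂ α zα ((y / zα) ^ (-(1 / γ))) * y ^ (m₂ - 1) +
          (y / zα) ^ (-(1 / γ)) / r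
        = 1 / (m₂ - (γ - 1) / γ) *
            (2 * (1 - (γ - 1) / γ) / (κ ^ 2 * (m₁ - 1) * (m₁ - (γ - 1) / γ)) * zα ^ (m₁ - 1) +
              (m₂ - 1) / r) * zα ^ (1 / γ) * y ^ (-(1 / γ)) -
          m₁ * C3 r δ κ γ m₁ m₂ β zβ h₂ * y ^ (m₁ - 1) := by
  intro h₂ y hh₂ hy
  obtain ⟨hz0, hz1⟩ := hzα
  have hγ0 : γ ≠ 0 := ne_of_gt hγ
  have hyz : 0 < y / zα := div_pos hy hz0
  have hm2γ : m₂ < (γ - 1) / γ := lt_of_lt_of_le hm2 (min_le_left _ _)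
  have hm20 : m₂ < 0 := lt_of_lt_of_le hm2 (min_le_right _ _)
  have hγs1 : (γ - 1) / γ < 1 := by rw [div_lt_one hγ]; linarith
  -- nonzero facts
  have hm2ne : m₂ ≠ 0 := ne_of_lt hm20
  have hm1ne : m₁ ≠ 0 := by intro h; rw [h] at hm1; linarith
  have hm11 : m₁ - 1 ≠ 0 := sub_ne_zero_of_ne (ne_of_gt hm1)
  have hm12 : m₁ - m₂ ≠ 0 := sub_ne_zero_of_ne (by linarith)
  have hm2g : m₂ - (γ - 1) / γ ≠ 0 := sub_ne_zero_of_ne (ne_of_lt hm2γ)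
  have hm1g : m₁ - (γ - 1) / γ ≠ 0 := sub_ne_zero_of_ne (by linarith)
  have hκ2 : κ ^ 2 ≠ 0 := by positivity
  have hgA : m₂ * γ - (γ - 1) ≠ 0 := by
    refine fun h => hm2g ?_
    field_simp
    linarith
  have hgB : m₁ * γ - (γ - 1) ≠ 0 := by
    refine fun h => hm1g ?_
    field_simp
    linarith
  have hrne : r ≠ 0 := ne_of_gt hr
  have hδne : δ ≠ 0 := ne_of_gt hδ
  have hzne : zα ≠ 0 := ne_of_gt hz0
  -- rpow power splitting for h̄ powers
  have hH : ∀ m : ℝ, ((y / zα) ^ (-(1 / γ)) : ℝ) ^ (1 + γ * (m - 1))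
      = zα ^ (m - 1) * zα ^ (1 / γ) * y ^ (-(1 / γ)) / y ^ (m - 1) := by
    intro m
    rw [← Real.rpow_mul hyz.le,
      show -(1 / γ) * (1 + γ * (m - 1)) = -(1 / γ) + -(m - 1) by field_simp; ring,
      Real.rpow_add hyz, Real.rpow_neg hyz.le (1 / γ), Real.rpow_neg hyz.le (m - 1),
      Real.div_rpow hy.le hz0.le, Real.div_rpow hy.le hz0.le, Real.rpow_neg hy.le]
    have h1 : (y : ℝ) ^ (1 / γ) ≠ 0 := (Real.rpow_pos_of_pos hy _).ne'
    have h2 : (zα : ℝ) ^ (1 / γ) ≠ 0 := (Real.rpow_pos_of_pos hz0 _).ne'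
    have h3 : (y : ℝ) ^ (m - 1) ≠ 0 := (Real.rpow_pos_of_pos hy _).ne'
    have h4 : (zα : ℝ) ^ (m - 1) ≠ 0 := (Real.rpow_pos_of_pos hz0 _).ne'
    field_simp
  have hh : ((y / zα) ^ (-(1 / γ)) : ℝ) = zα ^ (1 / γ) * y ^ (-(1 / γ)) := by
    rw [Real.div_rpow hy.le hz0.le, Real.rpow_neg hz0.le]
    have h2 : (zα : ℝ) ^ (1 / γ) ≠ 0 := (Real.rpow_pos_of_pos hz0 _).ne'
    field_simp
  -- zα power relations
  have hza : zα ^ (-m₂) = (zα * zα ^ (m₂ - 1))⁻¹ := by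
    rw [show (-m₂ : ℝ) = -(1 + (m₂ - 1)) by ring, Real.rpow_neg hz0.le,
      Real.rpow_add hz0, Real.rpow_one]
  have hzb : zα ^ (1 - m₂) = zα * (zα * zα ^ (m₂ - 1))⁻¹ := by
    rw [show (1 - m₂ : ℝ) = 1 + -(1 + (m₂ - 1)) by ring, Real.rpow_add hz0,
      Real.rpow_one, Real.rpow_neg hz0.le, Real.rpow_add hz0, Real.rpow_one]
  -- solve the zα equation for α
  have hα_eq : α = 1 / δ -
      (2 / (κ ^ 2 * m₁ * (m₁ - 1)) * (zα ^ (m₁ - 1) * zα) + zα / r * (m₂ - 1)) / m₂ := by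
    have hz' : zα ^ m₁ = zα ^ (m₁ - 1) * zα := by
      rw [← Real.rpow_add_one hz0.ne', show m₁ - 1 + 1 = m₁ by ring]
    rw [hz'] at hzαeq
    field_simp at hzαeq ⊢
    linarith [hzαeq]
  -- positivity of remaining atoms
  have hY1 : (y : ℝ) ^ (m₁ - 1) ≠ 0 := (Real.rpow_pos_of_pos hy _).ne'
  have hY2 : (y : ℝ) ^ (m₂ - 1) ≠ 0 := (Real.rpow_pos_of_pos hy _).ne'
  have hB : (zα : ℝ) ^ (m₂ - 1) ≠ 0 := (Real.rpow_pos_of_pos hz0 _).ne'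
  have main :
      -(m₁ * (2 * (1 - (γ - 1) / γ) /
            (κ ^ 2 * (m₁ - m₂) * m₁ * (m₁ - 1) * (m₁ - (γ - 1) / γ)) *
            ((y / zα) ^ (-(1 / γ))) ^ (1 + γ * (m₁ - 1))) * y ^ (m₁ - 1)) -
          m₂ * C2 r δ κ γ m₁ m₂ α zα ((y / zα) ^ (-(1 / γ))) * y ^ (m₂ - 1) +
          (y / zα) ^ (-(1 / γ)) / r
        = 1 / (m₂ - (γ - 1) / γ) *
            (2 * (1 - (γ - 1) / γ) / (κ ^ 2 * (m₁ - 1) * (m₁ - (γ - 1) / γ)) * zα ^ (m₁ - 1) +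
              (m₂ - 1) / r) * zα ^ (1 / γ) * y ^ (-(1 / γ)) := by
    simp only [C2]
    rw [hH m₁, hH m₂, hh, hza, hzb, hα_eq]
    have hgA' : γ * m₂ - (γ - 1) ≠ 0 := fun h => hgA (by linarith)
    field_simp
    ring
  simp only [C1]
  linear_combination main
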